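/- Second row of the Gauss–Manin system: let 0 < α, β < 1 and set u(t) = ₂F₁(α, 1−β; 1; 1−t) and v(t) = (1−β)(1−t)·₂F₁(α, 2−β; 2; 1−t) for 0 < t < 1. Then t·u'(t) = −(1−β)·u(t) + (1−α)·(1−t)^{−1}·v(t) and t·v'(t) = −(1−β)·u(t) + (1−α)·v(t). -/

import Mathlib

open scoped BigOperators
open Real MeasureTheory Filter Set

noncomputable def poch (a : ℝ) (n : ℕ) : ℝ := ∏ i ∈ Finset.range n, (a + i)

noncomputable def F21 (a b c t : ℝ) : ℝ :=
  ∑' n : ℕ, poch a n * poch b n / (poch c n * n.factorial) * t ^ n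

noncomputable def F32 (a b c d e t : ℝ) : ℝ :=
  ∑' n : ℕ, poch a n * poch b n * poch c n / (poch d n * poch e n * n.factorial) * t ^ n

noncomputable def Beta (x y : ℝ) : ℝ := Real.Gamma x * Real.Gamma y / Real.Gamma (x + y)

/-!
Put `x = 1 - t` and `b = 1 - β`, so that `u = F(α, b; 1; x)` and `v = b x F(α, b + 1; 2; x)`.
For `0 ≤ α, b ≤ 1` both series have coefficients in `[0, 1]`, hence converge and can be
differentiated termwise on `|x| < 1`. The two rows are then the differential forms
`(1 - x) u' = b u - (1 - α) v / x` and `u = (1 - x) (v / b)' + (1 - α) v / b` of Gauss'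
contiguous relations, which reduce coefficientwise to `b (b + 1)ₙ = (b)ₙ₊₁`.
-/

lemma poch_succ (a : ℝ) (n : ℕ) : poch a (n + 1) = poch a n * (a + n) :=
  Finset.prod_range_succ _ _

lemma poch_succ' (a : ℝ) (n : ℕ) : poch a (n + 1) = a * poch (a + 1) n := by
  rw [poch, Finset.prod_range_succ', mul_comm]
  simp only [poch, Nat.cast_add, Nat.cast_one, Nat.cast_zero, add_zero]
  congr 1
  exact Finset.prod_congr rfl fun i _ => by ring

lemma poch_nonneg {a : ℝ} (ha : 0 ≤ a) (n : ℕ) : 0 ≤ poch a n :=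
  Finset.prod_nonneg fun i _ => by positivity

lemma poch_le_poch {a b : ℝ} (ha : 0 ≤ a) (hab : a ≤ b) (n : ℕ) : poch a n ≤ poch b n :=
  Finset.prod_le_prod (fun i _ => by positivity) fun i _ => by linarith

lemma poch_one (n : ℕ) : poch 1 n = n.factorial := by
  induction n with
  | zero => simp [poch]
  | succ n ih => rw [poch_succ, ih, Nat.factorial_succ]; push_cast; ring

lemma poch_two (n : ℕ) : poch 2 n = (n + 1).factorial := by
  induction n with
  | zero => simp [poch]
  | succ n ih => rw [poch_succ, ih, Nat.factorial_succ (n + 1)]; push_cast; ring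

noncomputable def hypCoef (a b c : ℝ) (n : ℕ) : ℝ :=
  poch a n * poch b n / (poch c n * n.factorial)

lemma hypCoef_zero (a b c : ℝ) : hypCoef a b c 0 = 1 := by simp [hypCoef, poch]

lemma abs_hypCoef_le_one {a b c : ℝ} (ha0 : 0 ≤ a) (ha1 : a ≤ 1) (hb0 : 0 ≤ b) (hbc : b ≤ c)
    (n : ℕ) : |hypCoef a b c n| ≤ 1 := by
  have hpa : poch a n ≤ n.factorial := poch_one n ▸ poch_le_poch ha0 ha1 n
  have hpb : poch b n ≤ poch c n := poch_le_poch hb0 hbc n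
  have hnum : 0 ≤ poch a n * poch b n := mul_nonneg (poch_nonneg ha0 n) (poch_nonneg hb0 n)
  have hden : 0 ≤ poch c n * n.factorial := by
    have := poch_nonneg (hb0.trans hbc) n; positivity
  rw [hypCoef, abs_of_nonneg (div_nonneg hnum hden)]
  refine div_le_one_of_le₀ ?_ hden
  calc poch a n * poch b n ≤ n.factorial * poch c n :=
        mul_le_mul hpa hpb (poch_nonneg hb0 n) (Nat.cast_nonneg _)
    _ = poch c n * n.factorial := mul_comm _ _

lemma hypCoef_contiguous_one (α b : ℝ) (n : ℕ) :
    (n + 1) * hypCoef α b 1 (n + 1)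
      = (n + b) * hypCoef α b 1 n - (1 - α) * b * hypCoef α (b + 1) 2 n := by
  have hrel : b * poch (b + 1) n = poch b n * (b + n) := by rw [← poch_succ', poch_succ]
  simp only [hypCoef, poch_one, poch_two, poch_succ α, poch_succ b, Nat.factorial_succ]
  push_cast
  field_simp
  linear_combination poch α n * (1 - α) * hrel

lemma hypCoef_contiguous_two (α b : ℝ) (n : ℕ) :
    hypCoef α b 1 (n + 1)
      = (n + 2) * hypCoef α (b + 1) 2 (n + 1) - (n + α) * hypCoef α (b + 1) 2 n := by
  simp only [hypCoef, poch_one, poch_two, poch_succ α, poch_succ' b, poch_succ (b + 1),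
    Nat.factorial_succ]
  push_cast
  field_simp
  ring

section BoundedCoefficients

variable {c : ℕ → ℝ} {C x : ℝ}

lemma summable_coe_mul_pow_pred {r : ℝ} (hr : |r| < 1) :
    Summable fun n : ℕ => (n : ℝ) * r ^ (n - 1) := by
  rw [← summable_nat_add_iff 1]
  simpa [Nat.descFactorial_one] using
    summable_descFactorial_mul_geometric_of_norm_lt_one 1 (r := r) (by simpa using hr)

lemma summable_mul_pow_of_abs_le (hc : ∀ n, |c n| ≤ C) (hx : |x| < 1) :
    Summable fun n => c n * x ^ n := by
  refine .of_norm_bounded ((summable_geometric_of_lt_one (abs_nonneg x) hx).mul_left C)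
    fun n => ?_
  rw [norm_mul, norm_pow, Real.norm_eq_abs, Real.norm_eq_abs]
  exact mul_le_mul_of_nonneg_right (hc n) (by positivity)

lemma norm_mul_coe_mul_pow_pred_le (hc : ∀ n, |c n| ≤ C) {y r : ℝ} (hy : |y| ≤ r) (n : ℕ) :
    ‖c n * (n * y ^ (n - 1))‖ ≤ C * (n * r ^ (n - 1)) := by
  rw [norm_mul, norm_mul, norm_pow, Real.norm_eq_abs, Real.norm_eq_abs, Real.norm_eq_abs,
    Nat.abs_cast]
  gcongr
  · exact (abs_nonneg _).trans (hc 0)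
  · exact hc n

lemma hasDerivAt_tsum_mul_pow (hc : ∀ n, |c n| ≤ C) (hx : |x| < 1) :
    HasDerivAt (fun y => ∑' n, c n * y ^ n) (∑' n, c n * (n * x ^ (n - 1))) x := by
  obtain ⟨r, hxr, hr1⟩ := exists_between hx
  have hr : |r| < 1 := by rwa [abs_of_pos ((abs_nonneg x).trans_lt hxr)]
  have hmem : x ∈ Ioo (-r) r := abs_lt.mp hxr
  exact hasDerivAt_tsum_of_isPreconnected ((summable_coe_mul_pow_pred hr).mul_left C)
    isOpen_Ioo isPreconnected_Ioo (fun n y _ => (hasDerivAt_pow n y).const_mul (c n))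
    (fun n y hy => norm_mul_coe_mul_pow_pred_le hc (abs_le.mpr ⟨hy.1.le, hy.2.le⟩) n)
    hmem (summable_mul_pow_of_abs_le hc hx) hmem

lemma hasSum_deriv_tsum_mul_pow (hc : ∀ n, |c n| ≤ C) (hx : |x| < 1) :
    HasSum (fun n => (n + 1) * c (n + 1) * x ^ n) (deriv (fun y => ∑' n, c n * y ^ n) x) := by
  have hsum : Summable fun n => c n * (n * x ^ (n - 1)) :=
    .of_norm_bounded ((summable_coe_mul_pow_pred (by rwa [abs_abs])).mul_left C)
      (norm_mul_coe_mul_pow_pred_le hc le_rfl)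
  rw [(hasDerivAt_tsum_mul_pow hc hx).deriv]
  have hshift := (hasSum_nat_add_iff' 1).mpr hsum.hasSum
  simp only [Finset.sum_range_one, Nat.cast_zero, zero_mul, mul_zero, sub_zero,
    Nat.add_sub_cancel, Nat.cast_add, Nat.cast_one] at hshift
  exact hshift.congr_fun fun n => by ring

end BoundedCoefficients

lemma HasSum.tail {G : Type*} [AddCommGroup G] [TopologicalSpace G] [IsTopologicalAddGroup G]
    {f : ℕ → G} {a : G} (h : HasSum f a) :
    HasSum (fun n => f (n + 1)) (a - f 0) := by
  simpa using (hasSum_nat_add_iff' 1).mpr h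

lemma HasSum.coe_mul_pow_of_succ {c : ℕ → ℝ} {x D : ℝ}
    (h : HasSum (fun n => (n + 1) * c (n + 1) * x ^ n) D) :
    HasSum (fun n => n * c n * x ^ n) (x * D) := by
  rw [← hasSum_nat_add_iff' 1]
  simpa [pow_succ] using (h.mul_left x).congr_fun fun n => by ring

section F21

variable {a b c x : ℝ}

lemma hasSum_F21 (ha0 : 0 ≤ a) (ha1 : a ≤ 1) (hb0 : 0 ≤ b) (hbc : b ≤ c) (hx : |x| < 1) :
    HasSum (fun n => hypCoef a b c n * x ^ n) (F21 a b c x) :=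
  (summable_mul_pow_of_abs_le (abs_hypCoef_le_one ha0 ha1 hb0 hbc) hx).hasSum

lemma hasSum_deriv_F21 (ha0 : 0 ≤ a) (ha1 : a ≤ 1) (hb0 : 0 ≤ b) (hbc : b ≤ c) (hx : |x| < 1) :
    HasSum (fun n => (n + 1) * hypCoef a b c (n + 1) * x ^ n) (deriv (F21 a b c) x) :=
  hasSum_deriv_tsum_mul_pow (abs_hypCoef_le_one ha0 ha1 hb0 hbc) hx

lemma differentiableAt_F21 (ha0 : 0 ≤ a) (ha1 : a ≤ 1) (hb0 : 0 ≤ b) (hbc : b ≤ c)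
    (hx : |x| < 1) : DifferentiableAt ℝ (F21 a b c) x :=
  (hasDerivAt_tsum_mul_pow (abs_hypCoef_le_one ha0 ha1 hb0 hbc) hx).differentiableAt

end F21

section Contiguous

variable {α b x : ℝ} (hα0 : 0 ≤ α) (hα1 : α ≤ 1) (hb0 : 0 ≤ b) (hb1 : b ≤ 1) (hx : |x| < 1)
include hα0 hα1 hb0 hb1 hx

lemma F21_contiguous_deriv_one :
    (1 - x) * deriv (F21 α b 1) x = b * F21 α b 1 x - (1 - α) * b * F21 α (b + 1) 2 x := by
  have hU := hasSum_F21 hα0 hα1 hb0 hb1 hx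
  have hG := hasSum_F21 hα0 hα1 (by linarith) (by linarith : b + 1 ≤ 2) hx
  have hD := hasSum_deriv_F21 hα0 hα1 hb0 hb1 hx
  have hD' : HasSum (fun n => (n + 1) * hypCoef α b 1 (n + 1) * x ^ n)
      (x * deriv (F21 α b 1) x + b * F21 α b 1 x - (1 - α) * b * F21 α (b + 1) 2 x) :=
    ((hD.coe_mul_pow_of_succ.add (hU.mul_left b)).sub (hG.mul_left ((1 - α) * b))).congr_fun
      fun n => by rw [hypCoef_contiguous_one]; ring
  linarith [hD.unique hD']

lemma F21_contiguous_deriv_two :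
    F21 α b 1 x = (1 - x) * (F21 α (b + 1) 2 x + x * deriv (F21 α (b + 1) 2) x)
      + (1 - α) * x * F21 α (b + 1) 2 x := by
  have hU := (hasSum_F21 hα0 hα1 hb0 hb1 hx).tail
  have hG := hasSum_F21 hα0 hα1 (by linarith) (by linarith : b + 1 ≤ 2) hx
  have hxE :=
    (hasSum_deriv_F21 hα0 hα1 (by linarith) (by linarith : b + 1 ≤ 2) hx).coe_mul_pow_of_succ
  have hP := ((hG.add hxE).congr_fun fun n => by ring :
    HasSum (fun n : ℕ => (n + 1) * hypCoef α (b + 1) 2 n * x ^ n) _).tail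
  have hQ : HasSum (fun n : ℕ => (n + α) * hypCoef α (b + 1) 2 n * x ^ (n + 1))
      (x * (x * deriv (F21 α (b + 1) 2) x) + α * (x * F21 α (b + 1) 2 x)) :=
    ((hxE.mul_left x).add ((hG.mul_left x).mul_left α)).congr_fun fun n => by ring
  have hU' : HasSum (fun n => hypCoef α b 1 (n + 1) * x ^ (n + 1)) _ :=
    (hP.sub hQ).congr_fun fun n => by rw [hypCoef_contiguous_two]; push_cast; ring
  simp only [hypCoef_zero, pow_zero, mul_one, Nat.cast_zero, zero_add] at hU hU'
  linear_combination hU.unique hU'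

end Contiguous

theorem gauss_manin_second_row (α β t : ℝ) (hα0 : 0 < α) (hα1 : α < 1) (hβ0 : 0 < β)
    (hβ1 : β < 1) (ht0 : 0 < t) (ht1 : t < 1) :
    (t * deriv (fun s => F21 α (1 - β) 1 (1 - s)) t
      = -(1 - β) * F21 α (1 - β) 1 (1 - t)
        + (1 - α) * (1 - t)⁻¹ * ((1 - β) * (1 - t) * F21 α (2 - β) 2 (1 - t))) ∧
    (t * deriv (fun s => (1 - β) * (1 - s) * F21 α (2 - β) 2 (1 - s)) t
      = -(1 - β) * F21 α (1 - β) 1 (1 - t)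
        + (1 - α) * ((1 - β) * (1 - t) * F21 α (2 - β) 2 (1 - t))) := by
  rw [show (2 : ℝ) - β = 1 - β + 1 by ring]
  have hx : |1 - t| < 1 := abs_lt.mpr ⟨by linarith, by linarith⟩
  have hb0 : 0 ≤ 1 - β := by linarith
  have hb1 : 1 - β ≤ 1 := by linarith
  have hV : HasDerivAt (fun s => (1 - β) * (1 - s) * F21 α (1 - β + 1) 2 (1 - s))
      (-((1 - β) * (F21 α (1 - β + 1) 2 (1 - t)
        + (1 - t) * deriv (F21 α (1 - β + 1) 2) (1 - t)))) t := by
    refine HasDerivAt.comp_const_sub (f := fun y => (1 - β) * y * F21 α (1 - β + 1) 2 y) 1 t ?_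
    have hF := (differentiableAt_F21 hα0.le hα1.le (by linarith : (0 : ℝ) ≤ 1 - β + 1)
      (by linarith : 1 - β + 1 ≤ (2 : ℝ)) hx).hasDerivAt
    convert ((hasDerivAt_id' (1 - t)).const_mul (1 - β)).mul hF using 1 <;> first | rfl | ring
  rw [deriv_comp_const_sub, hV.deriv]
  have hode₁ := F21_contiguous_deriv_one hα0.le hα1.le hb0 hb1 hx
  have hode₂ := F21_contiguous_deriv_two hα0.le hα1.le hb0 hb1 hx
  have ht : 1 - t ≠ 0 := by linarith
  constructor
  · rw [sub_sub_cancel] at hode₁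
    field_simp
    linear_combination -hode₁
  · rw [sub_sub_cancel] at hode₂
    linear_combination (1 - β) * hode₂
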